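/- arXiv:1504.01095 — 4 statements merged into one kernel-verified Lean document; each statement's English description precedes it below -/
import Mathlib

section
/- Let m, r be positive natural numbers and let μ : Fin m → Fin m → Fin r → Fin r → ℂ be a tensor satisfying the Hermitian symmetry μ j k α β = conj (μ k j β α) for all indices. Assume: (1) Griffiths positivity: for every v : Fin m → ℂ and every ξ : Fin r → ℂ, the complex number ∑_{j,k,α,β} (μ j k α β) · (v j) · conj (v k) · (ξ α) · conj (ξ β) is real and nonnegative; and (2) vanishing trace: for all j, k, ∑_{α} μ j k α α = 0. Then μ j k α β = 0 for all j, k, α, β. -/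
open Finset

private lemma mySum_single {ι : Type*} [Fintype ι] [DecidableEq ι] (f : ι → ℂ) (a : ι)
    (hf : ∀ i, i ≠ a → f i = 0) : ∑ i, f i = f a :=
  Finset.sum_eq_single a (fun b _ hb => hf b hb) (fun h => absurd (Finset.mem_univ a) h)

private lemma mySum_pair {ι : Type*} [Fintype ι] [DecidableEq ι] (f : ι → ℂ) {a b : ι}
    (hab : a ≠ b) (hf : ∀ i, i ≠ a → i ≠ b → f i = 0) : ∑ i, f i = f a + f b := by
  rw [← Finset.sum_pair hab]
  exact (Finset.sum_subset (Finset.subset_univ _) (fun x _ hx => by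
    simp only [Finset.mem_insert, Finset.mem_singleton, not_or] at hx
    exact hf x hx.1 hx.2)).symm

private lemma quad_single {ι : Type*} [Fintype ι] [DecidableEq ι] (B : ι → ι → ℂ) (a : ι) :
    ∑ j, ∑ k, B j k * (if j = a then (1 : ℂ) else 0)
      * starRingEnd ℂ (if k = a then (1 : ℂ) else 0) = B a a := by
  rw [mySum_single _ a (fun i hi => by simp [hi])]
  rw [mySum_single _ a (fun i hi => by simp [hi])]
  simp

private lemma quad_pair {ι : Type*} [Fintype ι] [DecidableEq ι] (B : ι → ι → ℂ) {a b : ι}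
    (hab : a ≠ b) (s t : ℂ) :
    ∑ j, ∑ k, B j k * (if j = a then s else if j = b then t else 0)
        * starRingEnd ℂ (if k = a then s else if k = b then t else 0)
      = B a a * s * starRingEnd ℂ s + B a b * s * starRingEnd ℂ t
        + B b a * t * starRingEnd ℂ s + B b b * t * starRingEnd ℂ t := by
  rw [mySum_pair _ hab (fun i hia hib => by
    apply Finset.sum_eq_zero
    intro k _
    simp [hia, hib])]
  rw [mySum_pair _ hab (fun i hia hib => by simp [hia, hib]),
      mySum_pair _ hab (fun i hia hib => by simp [hia, hib])]
  simp [hab, hab.symm]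
  ring

/-- A sesquilinear form vanishing on all vectors has zero coefficient matrix. -/
private lemma quad_zero {ι : Type*} [Fintype ι] [DecidableEq ι] (B : ι → ι → ℂ)
    (h : ∀ v : ι → ℂ, ∑ j, ∑ k, B j k * v j * starRingEnd ℂ (v k) = 0) :
    ∀ j k, B j k = 0 := by
  have hdiag : ∀ j, B j j = 0 := by
    intro j
    have := h (fun i => if i = j then 1 else 0)
    rwa [quad_single B j] at this
  intro j k
  by_cases hjk : j = k
  · subst hjk; exact hdiag j
  · have e1 := h (fun i => if i = j then 1 else if i = k then 1 else 0)
    have e2 := h (fun i => if i = j then 1 else if i = k then Complex.I else 0)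
    rw [quad_pair B hjk] at e1 e2
    simp [hdiag, Complex.conj_I] at e1 e2
    -- e1 : B j k + B k j = 0 ;  e2 : B j k * (-I) + B k j * I = 0
    linear_combination e1 / 2 + Complex.I / 2 * e2 + (B j k / 2 - B k j / 2) * Complex.I_sq

/-- A Hermitian positive semidefinite matrix with zero trace is zero. -/
private lemma psd_trace_zero {ι : Type*} [Fintype ι] [DecidableEq ι] (A : ι → ι → ℂ)
    (hh : ∀ α β, A α β = starRingEnd ℂ (A β α))
    (hp : ∀ ξ : ι → ℂ, ∃ c : ℝ, 0 ≤ c ∧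
      (∑ α, ∑ β, A α β * ξ α * starRingEnd ℂ (ξ β)) = (c : ℂ))
    (ht : ∑ α, A α α = 0) : ∀ α β, A α β = 0 := by
  -- diagonal entries are nonnegative reals
  have hdiagc : ∀ α, ∃ c : ℝ, 0 ≤ c ∧ A α α = (c : ℂ) := by
    intro α
    obtain ⟨c, hc0, hc⟩ := hp (fun i => if i = α then 1 else 0)
    rw [quad_single A α] at hc
    exact ⟨c, hc0, hc⟩
  choose c hc0 hcA using hdiagc
  have hsum : ∑ α, c α = 0 := by
    have : ((∑ α, c α : ℝ) : ℂ) = 0 := by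
      push_cast
      rw [← ht]
      exact Finset.sum_congr rfl fun α _ => (hcA α).symm
    exact_mod_cast this
  have hdiag : ∀ α, A α α = 0 := by
    intro α
    rw [hcA α]
    have := (Finset.sum_eq_zero_iff_of_nonneg (fun i _ => hc0 i)).mp hsum α (Finset.mem_univ α)
    simp [this]
  intro α β
  by_cases hab : α = β
  · subst hab; exact hdiag α
  · obtain ⟨d, hd0, hd⟩ := hp (fun i => if i = α then 1 else if i = β then -(A α β) else 0)
    rw [quad_pair A hab] at hd
    rw [hdiag α, hdiag β, hh β α] at hd
    simp only [map_neg, map_one, mul_one, one_mul, zero_mul, mul_neg, neg_mul, zero_add,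
      add_zero, neg_zero] at hd
    have hmc : A α β * starRingEnd ℂ (A α β) = (Complex.normSq (A α β) : ℂ) :=
      Complex.mul_conj _
    have key : (d : ℂ) = -2 * Complex.normSq (A α β) := by
      linear_combination -hd - 2 * hmc
    have : d = -2 * Complex.normSq (A α β) := by exact_mod_cast key
    have hns : Complex.normSq (A α β) = 0 := by
      have h1 : (0:ℝ) ≤ Complex.normSq (A α β) := Complex.normSq_nonneg _
      nlinarith
    exact Complex.normSq_eq_zero.mp hns

private lemma sum_swap4 {ι κ : Type*} [Fintype ι] [Fintype κ] (f : ι → ι → κ → κ → ℂ) :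
    ∑ j, ∑ k, ∑ α, ∑ β, f j k α β = ∑ α, ∑ β, ∑ j, ∑ k, f j k α β :=
  calc ∑ j, ∑ k, ∑ α, ∑ β, f j k α β
      = ∑ j, ∑ α, ∑ k, ∑ β, f j k α β :=
        Finset.sum_congr rfl fun j _ => Finset.sum_comm
    _ = ∑ α, ∑ j, ∑ k, ∑ β, f j k α β := Finset.sum_comm
    _ = ∑ α, ∑ j, ∑ β, ∑ k, f j k α β :=
        Finset.sum_congr rfl fun α _ => Finset.sum_congr rfl fun j _ => Finset.sum_comm
    _ = ∑ α, ∑ β, ∑ j, ∑ k, f j k α β :=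
        Finset.sum_congr rfl fun α _ => Finset.sum_comm

/-- Pointwise linear-algebra content of Corollary 2.8(b): a Hermitian tensor that is
Griffiths-positive (on decomposable vectors) and has vanishing partial trace is zero. -/
theorem griffiths_positive_trace_zero_eq_zero
    (m r : ℕ) (hm : 0 < m) (hr : 0 < r)
    (μ : Fin m → Fin m → Fin r → Fin r → ℂ)
    (hherm : ∀ j k α β, μ j k α β = starRingEnd ℂ (μ k j β α))
    (hpos : ∀ (v : Fin m → ℂ) (ξ : Fin r → ℂ),
      ∃ c : ℝ, 0 ≤ c ∧
        (∑ j, ∑ k, ∑ α, ∑ β,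
          μ j k α β * v j * starRingEnd ℂ (v k) * ξ α * starRingEnd ℂ (ξ β)) = (c : ℂ))
    (htr : ∀ j k, ∑ α, μ j k α α = 0) :
    ∀ j k α β, μ j k α β = 0 := by
  -- For each fixed v, the r×r matrix A v is Hermitian, PSD and traceless, hence zero.
  have hA : ∀ (v : Fin m → ℂ) (α β : Fin r),
      (∑ j, ∑ k, μ j k α β * v j * starRingEnd ℂ (v k)) = 0 := by
    intro v
    apply psd_trace_zero
    · -- Hermitian
      intro α β
      rw [map_sum]
      rw [Finset.sum_comm]
      refine Finset.sum_congr rfl fun j _ => ?_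
      rw [map_sum]
      refine Finset.sum_congr rfl fun k _ => ?_
      rw [map_mul, map_mul, Complex.conj_conj, ← hherm]
      ring
    · -- positivity
      intro ξ
      obtain ⟨c, hc0, hc⟩ := hpos v ξ
      refine ⟨c, hc0, ?_⟩
      rw [← hc, sum_swap4]
      refine Finset.sum_congr rfl fun α _ => Finset.sum_congr rfl fun β _ => ?_
      simp [Finset.sum_mul]
    · -- trace
      have hswap : ∑ α, ∑ j, ∑ k, μ j k α α * v j * starRingEnd ℂ (v k)
          = ∑ j, ∑ k, ∑ α, μ j k α α * v j * starRingEnd ℂ (v k) := by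
        rw [Finset.sum_comm]
        exact Finset.sum_congr rfl fun j _ => Finset.sum_comm
      rw [hswap]
      apply Finset.sum_eq_zero
      intro j _
      apply Finset.sum_eq_zero
      intro k _
      rw [← Finset.sum_mul, ← Finset.sum_mul, htr, zero_mul, zero_mul]
  intro j k α β
  exact quad_zero (fun j k => μ j k α β) (fun v => hA v α β) j k
end

section
/- Let X be a measurable space, let m, r be positive natural numbers, and let μ : Fin m → Fin m → Fin r → Fin r → (complex measures on X) be a family of complex (finite, countably additive, ℂ-valued) measures. Assume: (1) Griffiths positivity: for every v : Fin m → ℂ and every ξ : Fin r → ℂ, the complex measure ∑_{j,k,α,β} (v j) · conj (v k) · (ξ α) · conj (ξ β) · (μ j k α β) takes a real, nonnegative value on every measurable set; and (2) vanishing trace: for all j, k, the complex measure ∑_{α} μ j k α α is the zero measure. Then every μ j k α β is the zero measure. -/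
open MeasureTheory

private lemma vm_sum_apply {X : Type*} [MeasurableSpace X] {ι : Type*} (t : Finset ι)
    (v : ι → MeasureTheory.ComplexMeasure X) (s : Set X) :
    (∑ i ∈ t, v i) s = ∑ i ∈ t, v i s :=
  map_sum (⟨⟨fun w => w s, rfl⟩, fun _ _ => rfl⟩ :
    MeasureTheory.ComplexMeasure X →+ ℂ) v t

/-- Evaluating the quadratic form at a one-point supported vector. -/
private lemma sum_one_point {n : ℕ} (b : Fin n → Fin n → ℂ) (j : Fin n) (a : ℂ) :
    (∑ p, ∑ q, (fun i => if i = j then a else 0) p *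
        starRingEnd ℂ ((fun i => if i = j then a else 0) q) * b p q)
      = a * starRingEnd ℂ a * b j j := by
  have h1 : ∀ p : Fin n, (∑ q, (fun i => if i = j then a else 0) p *
      starRingEnd ℂ ((fun i => if i = j then a else 0) q) * b p q)
      = (if p = j then a else 0) * starRingEnd ℂ a * b p j := by
    intro p
    rw [Finset.sum_eq_single j]
    · simp
    · intro q _ hq; simp [hq]
    · simp
  rw [Finset.sum_congr rfl fun p _ => h1 p, Finset.sum_eq_single j]
  · simp
  · intro p _ hp; simp [hp]
  · simp

/-- Evaluating the quadratic form at a two-point supported vector. -/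
private lemma sum_two_point {n : ℕ} (b : Fin n → Fin n → ℂ) {j k : Fin n} (hjk : j ≠ k)
    (a c : ℂ) :
    (∑ p, ∑ q, (fun i => if i = j then a else if i = k then c else 0) p *
        starRingEnd ℂ ((fun i => if i = j then a else if i = k then c else 0) q) * b p q)
      = a * starRingEnd ℂ a * b j j + a * starRingEnd ℂ c * b j k
        + c * starRingEnd ℂ a * b k j + c * starRingEnd ℂ c * b k k := by
  set v : Fin n → ℂ := fun i => if i = j then a else if i = k then c else 0 with hv
  have hkj : k ≠ j := hjk.symm
  have hv0 : ∀ p : Fin n, p ≠ j → p ≠ k → v p = 0 := by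
    intro p h1 h2; simp [hv, h1, h2]
  have hvj : v j = a := by simp [hv]
  have hvk : v k = c := by simp [hv, hkj]
  have hinner : ∀ p : Fin n, (∑ q, v p * starRingEnd ℂ (v q) * b p q)
      = v p * starRingEnd ℂ a * b p j + v p * starRingEnd ℂ c * b p k := by
    intro p
    have hsub : (∑ q ∈ ({j, k} : Finset (Fin n)), v p * starRingEnd ℂ (v q) * b p q)
        = ∑ q, v p * starRingEnd ℂ (v q) * b p q := by
      refine Finset.sum_subset (Finset.subset_univ _) ?_
      intro q _ hq
      simp only [Finset.mem_insert, Finset.mem_singleton] at hq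
      push_neg at hq
      rw [hv0 q hq.1 hq.2]
      simp
    rw [← hsub, Finset.sum_pair hjk, hvj, hvk]
  rw [Finset.sum_congr rfl fun p _ => hinner p]
  have hsub : (∑ p ∈ ({j, k} : Finset (Fin n)),
      (v p * starRingEnd ℂ a * b p j + v p * starRingEnd ℂ c * b p k))
      = ∑ p, (v p * starRingEnd ℂ a * b p j + v p * starRingEnd ℂ c * b p k) := by
    refine Finset.sum_subset (Finset.subset_univ _) ?_
    intro p _ hp
    simp only [Finset.mem_insert, Finset.mem_singleton] at hp
    push_neg at hp
    rw [hv0 p hp.1 hp.2]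
    simp
  rw [← hsub, Finset.sum_pair hjk, hvj, hvk]
  ring

/-- A sesquilinear form that vanishes on the diagonal vanishes identically
(complex polarization). -/
private lemma sesq_eq_zero {n : ℕ} (b : Fin n → Fin n → ℂ)
    (h : ∀ v : Fin n → ℂ, ∑ p, ∑ q, v p * starRingEnd ℂ (v q) * b p q = 0) :
    ∀ p q, b p q = 0 := by
  have hdiag : ∀ p, b p p = 0 := by
    intro p
    have h1 := h (fun i => if i = p then 1 else 0)
    rw [sum_one_point] at h1
    simpa using h1
  intro p q
  by_cases hpq : p = q
  · subst hpq; exact hdiag p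
  · have h1 := h (fun i => if i = p then 1 else if i = q then 1 else 0)
    rw [sum_two_point b hpq 1 1] at h1
    have h2 := h (fun i => if i = p then 1 else if i = q then Complex.I else 0)
    rw [sum_two_point b hpq 1 Complex.I] at h2
    simp only [hdiag, map_one, one_mul, mul_one, mul_zero, add_zero, zero_add,
      Complex.conj_I] at h1 h2
    -- h1 : b p q + b q p = 0 ; h2 : -I * b p q + I * b q p = 0 (in some form)
    have h3 : Complex.I * (b p q - b q p) = 0 := by linear_combination -h2
    rcases mul_eq_zero.mp h3 with hI | hd
    · exact absurd hI Complex.I_ne_zero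
    · have : b p q = b q p := sub_eq_zero.mp hd
      have h4 : b p q + b p q = 0 := by rw [this] at h1 ⊢; linear_combination h1
      linear_combination h4 / 2

/-- A positive semidefinite sesquilinear form with vanishing trace vanishes. -/
private lemma psd_trace_zero_s1 {n : ℕ} (b : Fin n → Fin n → ℂ)
    (hpos : ∀ ξ : Fin n → ℂ, ∃ c : ℝ, 0 ≤ c ∧
      ∑ p, ∑ q, ξ p * starRingEnd ℂ (ξ q) * b p q = (c : ℂ))
    (htr : ∑ p, b p p = 0) : ∀ p q, b p q = 0 := by
  -- diagonal entries are nonnegative reals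
  have hd : ∀ p, ∃ c : ℝ, 0 ≤ c ∧ b p p = (c : ℂ) := by
    intro p
    obtain ⟨c, hc, hsum⟩ := hpos (fun i => if i = p then 1 else 0)
    rw [sum_one_point] at hsum
    exact ⟨c, hc, by simpa using hsum⟩
  choose d hd0 hdv using hd
  have hsumd : ∑ p, d p = 0 := by
    have h0 : ((∑ p, d p : ℝ) : ℂ) = 0 := by
      push_cast
      rw [← htr]
      exact Finset.sum_congr rfl fun p _ => (hdv p).symm
    exact_mod_cast h0
  have hdzero : ∀ p ∈ Finset.univ, d p = 0 :=
    (Finset.sum_eq_zero_iff_of_nonneg fun p _ => hd0 p).mp hsumd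
  have hdiag : ∀ p, b p p = 0 := by
    intro p
    rw [hdv p, hdzero p (Finset.mem_univ p)]
    simp
  intro p q
  by_cases hpq : p = q
  · subst hpq; exact hdiag p
  · have key : ∀ c : ℂ, ∃ e : ℝ, 0 ≤ e ∧
        starRingEnd ℂ c * b p q + c * b q p = (e : ℂ) := by
      intro c
      obtain ⟨e, he, hsum⟩ := hpos (fun i => if i = p then 1 else if i = q then c else 0)
      rw [sum_two_point b hpq 1 c] at hsum
      refine ⟨e, he, ?_⟩
      rw [← hsum]
      simp [hdiag]
    obtain ⟨e1, he1, h1⟩ := key 1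
    obtain ⟨e2, he2, h2⟩ := key (-1)
    obtain ⟨e3, he3, h3⟩ := key Complex.I
    obtain ⟨e4, he4, h4⟩ := key (-Complex.I)
    -- e1 + e2 = 0 hence both are zero; similarly e3, e4
    have h12 : ((e1 + e2 : ℝ) : ℂ) = 0 := by
      push_cast
      simp only [map_one, map_neg, one_mul, neg_mul, neg_neg] at h1 h2
      linear_combination -h1 - h2
    have h34 : ((e3 + e4 : ℝ) : ℂ) = 0 := by
      push_cast
      simp only [map_neg, Complex.conj_I, neg_neg] at h3 h4
      linear_combination -h3 - h4
    have he12 : e1 + e2 = 0 := by exact_mod_cast h12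
    have he34 : e3 + e4 = 0 := by exact_mod_cast h34
    have he1z : e1 = 0 := le_antisymm (by linarith) he1
    have he3z : e3 = 0 := le_antisymm (by linarith) he3
    rw [he1z] at h1
    rw [he3z] at h3
    simp only [map_one, one_mul, Complex.conj_I, Complex.ofReal_zero] at h1 h3
    -- h1 : b p q + b q p = 0 ; h3 : -I * b p q + I * b q p = 0
    have h5 : Complex.I * (b p q - b q p) = 0 := by linear_combination -h3
    rcases mul_eq_zero.mp h5 with hI | hdd
    · exact absurd hI Complex.I_ne_zero
    · have heq : b p q = b q p := sub_eq_zero.mp hdd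
      have h6 : b p q + b p q = 0 := by rw [heq] at h1 ⊢; linear_combination h1
      linear_combination h6 / 2

private lemma sum3_comm {A B C : Type*} [Fintype A] [Fintype B] [Fintype C]
    (f : A → B → C → ℂ) :
    ∑ a, ∑ b, ∑ c, f a b c = ∑ c, ∑ a, ∑ b, f a b c := by
  have h : ∀ a, (∑ b, ∑ c, f a b c) = ∑ c, ∑ b, f a b c := fun a => Finset.sum_comm
  rw [Finset.sum_congr rfl fun a _ => h a, Finset.sum_comm]

private lemma sum4_comm {m r : ℕ} (T : Fin m → Fin m → Fin r → Fin r → ℂ) :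
    ∑ j, ∑ k, ∑ α, ∑ β, T j k α β = ∑ α, ∑ β, ∑ j, ∑ k, T j k α β := by
  rw [sum3_comm (fun j k α => ∑ β, T j k α β)]
  exact Finset.sum_congr rfl fun α _ => sum3_comm (fun j k β => T j k α β)

private lemma sum_reorder {m r : ℕ} (f : Fin m → Fin m → Fin r → Fin r → ℂ)
    (v : Fin m → ℂ) (ξ : Fin r → ℂ) :
    ∑ j, ∑ k, ∑ α, ∑ β,
        (v j * starRingEnd ℂ (v k) * ξ α * starRingEnd ℂ (ξ β)) * f j k α β
      = ∑ α, ∑ β, ξ α * starRingEnd ℂ (ξ β)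
          * (∑ j, ∑ k, v j * starRingEnd ℂ (v k) * f j k α β) := by
  rw [sum4_comm]
  refine Finset.sum_congr rfl fun α _ => Finset.sum_congr rfl fun β _ => ?_
  rw [Finset.mul_sum]
  refine Finset.sum_congr rfl fun j _ => ?_
  rw [Finset.mul_sum]
  exact Finset.sum_congr rfl fun k _ => by ring

private lemma sum_reorder3 {m r : ℕ} (f : Fin m → Fin m → Fin r → ℂ) :
    (∑ α, ∑ j, ∑ k, f j k α) = ∑ j, ∑ k, ∑ α, f j k α :=
  (sum3_comm fun j k α => f j k α).symm

private lemma scalarize {X : Type*} [MeasurableSpace X] {m r : ℕ}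
    (μ : Fin m → Fin m → Fin r → Fin r → MeasureTheory.ComplexMeasure X)
    (coef : Fin m → Fin m → Fin r → Fin r → ℂ) (s : Set X) :
    (∑ j, ∑ k, ∑ α, ∑ β, coef j k α β • μ j k α β) s
      = ∑ j, ∑ k, ∑ α, ∑ β, coef j k α β * μ j k α β s := by
  simp only [vm_sum_apply, VectorMeasure.smul_apply, smul_eq_mul]

/-- Measure-theoretic statement from the proof of Corollary 2.8(b): a family of complex
measures which is Griffiths-positive (the combination against decomposable vectors
`v ⊗ ξ` is a nonnegative real measure) and whose partial trace vanishes is identically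
zero. -/
theorem griffiths_positive_measures_trace_zero_eq_zero
    {X : Type*} [MeasurableSpace X] (m r : ℕ) (hm : 0 < m) (hr : 0 < r)
    (μ : Fin m → Fin m → Fin r → Fin r → MeasureTheory.ComplexMeasure X)
    (hpos : ∀ (v : Fin m → ℂ) (ξ : Fin r → ℂ) (s : Set X), MeasurableSet s →
      ∃ c : ℝ, 0 ≤ c ∧
        (∑ j, ∑ k, ∑ α, ∑ β,
          (v j * starRingEnd ℂ (v k) * ξ α * starRingEnd ℂ (ξ β)) • μ j k α β) s = (c : ℂ))
    (htr : ∀ j k, (∑ α, μ j k α α) = 0) :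
    ∀ j k α β, μ j k α β = 0 := by
  intro j₀ k₀ α₀ β₀
  refine VectorMeasure.ext fun s hs => ?_
  rw [VectorMeasure.zero_apply]
  set a : Fin m → Fin m → Fin r → Fin r → ℂ := fun j k α β => μ j k α β s with ha
  -- scalar form of the positivity hypothesis
  have hA : ∀ (v : Fin m → ℂ) (ξ : Fin r → ℂ), ∃ c : ℝ, 0 ≤ c ∧
      ∑ α, ∑ β, ξ α * starRingEnd ℂ (ξ β)
        * (∑ j, ∑ k, v j * starRingEnd ℂ (v k) * a j k α β) = (c : ℂ) := by
    intro v ξ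
    obtain ⟨c, hc, hsum⟩ := hpos v ξ s hs
    refine ⟨c, hc, ?_⟩
    rw [← hsum, scalarize]
    exact (sum_reorder a v ξ).symm
  -- scalar form of the trace hypothesis
  have hT : ∀ jj kk, ∑ α, a jj kk α α = 0 := by
    intro jj kk
    have h0 : (∑ α, μ jj kk α α) s = 0 := by rw [htr jj kk]; rfl
    rw [vm_sum_apply] at h0
    exact h0
  -- step 1: for every v, the r×r form vanishes
  have step1 : ∀ (v : Fin m → ℂ) (α β : Fin r),
      (∑ j, ∑ k, v j * starRingEnd ℂ (v k) * a j k α β) = 0 := by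
    intro v α β
    refine psd_trace_zero_s1 (fun α β => ∑ j, ∑ k, v j * starRingEnd ℂ (v k) * a j k α β)
      (hA v) ?_ α β
    rw [sum_reorder3 (fun j k α => v j * starRingEnd ℂ (v k) * a j k α α)]
    have : ∀ jj kk, (∑ α, v jj * starRingEnd ℂ (v kk) * a jj kk α α) = 0 := by
      intro jj kk
      rw [← Finset.mul_sum, hT jj kk, mul_zero]
    exact Finset.sum_eq_zero fun jj _ => Finset.sum_eq_zero fun kk _ => this jj kk
  -- step 2: polarization in v
  exact sesq_eq_zero (fun j k => a j k α₀ β₀) (fun v => step1 v α₀ β₀) j₀ k₀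
end

section
/- Let m, r be positive natural numbers and let μ : Fin m → Fin m → Fin r → Fin r → ℂ satisfy the Hermitian symmetry μ j k α β = conj (μ k j β α). Assume: (1) for every v : Fin m → ℂ and every ξ : Fin r → ℂ, the complex number ∑_{j,k,α,β} (μ j k α β) · (v j) · conj (v k) · (ξ α) · conj (ξ β) is real and nonnegative; and (2) for every α and all j, k, one has μ j k α α = 0. Then μ j k α β = 0 for all j, k, α, β. -/
open Complex

lemma sum_two_support {n : ℕ} (a b : Fin n) (hab : a ≠ b) (f : Fin n → ℂ)
    (hf : ∀ c, c ≠ a → c ≠ b → f c = 0) : ∑ c, f c = f a + f b := by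
  rw [← Finset.sum_subset (Finset.subset_univ ({a, b} : Finset (Fin n)))
    (fun c _ hc => by
      simp only [Finset.mem_insert, Finset.mem_singleton, not_or] at hc
      exact hf c hc.1 hc.2)]
  exact Finset.sum_pair hab

lemma pair_eval {n : ℕ} (a b : Fin n) (hab : a ≠ b) (t : ℂ) (F : Fin n → Fin n → ℂ) :
    (∑ γ, ∑ δ, F γ δ * (if γ = a then 1 else if γ = b then t else 0) *
      starRingEnd ℂ (if δ = a then 1 else if δ = b then t else 0))
    = F a a + F a b * starRingEnd ℂ t + F b a * t + F b b * (t * starRingEnd ℂ t) := by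
  rw [sum_two_support a b hab _ (fun γ h1 h2 => by simp [h1, h2])]
  rw [sum_two_support a b hab _ (fun δ h1 h2 => by simp [h1, h2])]
  rw [sum_two_support a b hab _ (fun δ h1 h2 => by simp [h1, h2])]
  simp [hab, Ne.symm hab]
  ring

lemma single_eval {n : ℕ} (a : Fin n) (F : Fin n → Fin n → ℂ) :
    (∑ j, ∑ k, F j k * (if j = a then 1 else 0) *
      starRingEnd ℂ (if k = a then 1 else 0)) = F a a := by
  rw [Fintype.sum_eq_single a (fun j hj => by simp [hj])]
  rw [Fintype.sum_eq_single a (fun k hk => by simp [hk])]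
  simp

/-- Polarization step (2.15) of Corollary 2.8(b): a Hermitian tensor which is
Griffiths-positive on decomposable vectors and whose diagonal blocks (in the bundle
index) vanish is identically zero. -/
theorem griffiths_positive_diag_zero_eq_zero
    (m r : ℕ) (hm : 0 < m) (hr : 0 < r)
    (μ : Fin m → Fin m → Fin r → Fin r → ℂ)
    (hherm : ∀ j k α β, μ j k α β = starRingEnd ℂ (μ k j β α))
    (hpos : ∀ (v : Fin m → ℂ) (ξ : Fin r → ℂ),
      ∃ c : ℝ, 0 ≤ c ∧
        (∑ j, ∑ k, ∑ α, ∑ β,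
          μ j k α β * v j * starRingEnd ℂ (v k) * ξ α * starRingEnd ℂ (ξ β)) = (c : ℂ))
    (hdiag : ∀ j k α, μ j k α α = 0) :
    ∀ j k α β, μ j k α β = 0 := by
  -- Step 1: for α ≠ β, the block sum vanishes for every v.
  have claim1 : ∀ (v : Fin m → ℂ) (α β : Fin r), α ≠ β →
      (∑ j, ∑ k, μ j k α β * v j * starRingEnd ℂ (v k)) = 0 := by
    intro v α β hab
    set M : ℂ := ∑ j, ∑ k, μ j k α β * v j * starRingEnd ℂ (v k) with hM
    set N : ℂ := ∑ j, ∑ k, μ j k β α * v j * starRingEnd ℂ (v k) with hN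
    have hNM : starRingEnd ℂ M = N := by
      rw [hM, hN]
      simp only [map_sum, map_mul, Complex.conj_conj]
      rw [Finset.sum_comm]
      refine Finset.sum_congr rfl fun a _ => Finset.sum_congr rfl fun b _ => ?_
      rw [hherm a b β α]
      ring
    obtain ⟨c, hc0, hc⟩ := hpos v (fun γ => if γ = α then 1 else if γ = β then -M else 0)
    have hS : (∑ j, ∑ k, ∑ γ, ∑ δ,
        μ j k γ δ * v j * starRingEnd ℂ (v k) *
          (if γ = α then 1 else if γ = β then -M else 0) *
          starRingEnd ℂ (if δ = α then 1 else if δ = β then -M else 0))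
        = M * starRingEnd ℂ (-M) + starRingEnd ℂ M * (-M) := by
      have h1 : ∀ j k, (∑ γ, ∑ δ,
          μ j k γ δ * v j * starRingEnd ℂ (v k) *
            (if γ = α then 1 else if γ = β then -M else 0) *
            starRingEnd ℂ (if δ = α then 1 else if δ = β then -M else 0))
          = (μ j k α β * v j * starRingEnd ℂ (v k)) * starRingEnd ℂ (-M)
            + (μ j k β α * v j * starRingEnd ℂ (v k)) * (-M) := by
        intro j k
        rw [pair_eval α β hab (-M) (fun γ δ => μ j k γ δ * v j * starRingEnd ℂ (v k))]
        simp [hdiag]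
      calc (∑ j, ∑ k, ∑ γ, ∑ δ,
          μ j k γ δ * v j * starRingEnd ℂ (v k) *
            (if γ = α then 1 else if γ = β then -M else 0) *
            starRingEnd ℂ (if δ = α then 1 else if δ = β then -M else 0))
          = ∑ j, ∑ k, ((μ j k α β * v j * starRingEnd ℂ (v k)) * starRingEnd ℂ (-M)
            + (μ j k β α * v j * starRingEnd ℂ (v k)) * (-M)) := by
            exact Finset.sum_congr rfl fun j _ => Finset.sum_congr rfl fun k _ => h1 j k
        _ = M * starRingEnd ℂ (-M) + starRingEnd ℂ M * (-M) := by
            simp only [Finset.sum_add_distrib, ← Finset.sum_mul, ← hM, ← hN, ← hNM]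
    rw [hS] at hc
    have hc' : (c : ℂ) = ((-2 * Complex.normSq M : ℝ) : ℂ) := by
      rw [← hc]
      push_cast
      rw [← Complex.mul_conj M]
      simp only [map_neg]
      ring
    have hcr : c = -2 * Complex.normSq M := by exact_mod_cast hc'
    have hnn := Complex.normSq_nonneg M
    have : Complex.normSq M = 0 := by linarith
    have : M = 0 := by rwa [Complex.normSq_eq_zero] at this
    rw [hM] at this
    exact this
  intro j k α β
  by_cases hab : α = β
  · subst hab; exact hdiag j k α
  · -- second polarization, in v
    have hdiag2 : ∀ l, μ l l α β = 0 := by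
      intro l
      have := claim1 (fun c => if c = l then 1 else 0) α β hab
      rwa [single_eval l (fun j' k' => μ j' k' α β)] at this
    by_cases hjk : j = k
    · subst hjk; exact hdiag2 j
    · have e : ∀ t : ℂ, μ j k α β * starRingEnd ℂ t + μ k j α β * t
          + μ k k α β * (t * starRingEnd ℂ t) = 0 := by
        intro t
        have := claim1 (fun c => if c = j then 1 else if c = k then t else 0) α β hab
        rw [pair_eval j k hjk t (fun j' k' => μ j' k' α β)] at this
        rw [hdiag2 j] at this
        linear_combination this
      have e1 := e 1
      have e2 := e Complex.I
      rw [hdiag2 k] at e1 e2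
      simp only [Complex.conj_I, map_one] at e1 e2
      have hIC : Complex.I * starRingEnd ℂ Complex.I = 1 := by
        simp [Complex.conj_I, Complex.I_mul_I]
      linear_combination e1 / 2 + Complex.I * e2 / 2 + ((μ j k α β - μ k j α β) / 2) * Complex.I_sq
end

section
/- Let V be a finite-dimensional complex inner product space and let U₁, …, Uₘ : V → V be pairwise commuting unitary linear operators such that the subgroup of unitary operators on V generated by U₁, …, Uₘ is infinite. Then there exists a nonzero vector e ∈ V and complex numbers λ₁, …, λₘ of modulus 1 with Uᵢ e = λᵢ • e for every i, such that the subgroup of the unit circle generated by λ₁, …, λₘ is infinite. -/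
open scoped InnerProductSpace

private lemma circle_coe_pow (z : Circle) (n : ℕ) : ((z ^ n : Circle) : ℂ) = (z : ℂ) ^ n := by
  simpa using map_pow Circle.coeHom z n


/-- If a finite family of pairwise commuting unitary operators on a finite-dimensional
complex inner product space generates an infinite group, then there is a nonzero common
eigenvector whose eigenvalues (of modulus one) generate an infinite subgroup of the
unit circle. -/
theorem commuting_unitaries_infinite_image_eigenvector
    {V : Type*} [NormedAddCommGroup V] [InnerProductSpace ℂ V]
    [FiniteDimensional ℂ V] (m : ℕ) (U : Fin m → (V ≃ₗ[ℂ] V))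
    (hunitary : ∀ i (x y : V), ⟪U i x, U i y⟫_ℂ = ⟪x, y⟫_ℂ)
    (hcomm : ∀ i j, U i * U j = U j * U i)
    (hinf : (Subgroup.closure (Set.range U) : Set (V ≃ₗ[ℂ] V)).Infinite) :
    ∃ (e : V) (lam : Fin m → Circle), e ≠ 0 ∧ (∀ i, U i e = (lam i : ℂ) • e) ∧
      (Subgroup.closure (Set.range lam) : Set Circle).Infinite := by
  classical
  by_contra hcon
  push_neg at hcon
  -- replace Infinite-negation with Finite
  have hcon' : ∀ (e : V) (lam : Fin m → Circle), e ≠ 0 → (∀ i, U i e = (lam i : ℂ) • e) →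
      (Subgroup.closure (Set.range lam) : Set Circle).Finite := by
    intro e lam he hl
    exact hcon e lam he hl
  -- the symmetric real/imaginary parts
  set u : Fin m → V →ₗ[ℂ] V := fun i => (U i : V →ₗ[ℂ] V) with hu
  have hadj : ∀ i, LinearMap.adjoint (u i) = ((U i).symm : V →ₗ[ℂ] V) := by
    intro i
    symm
    rw [LinearMap.eq_adjoint_iff]
    intro x y
    have := hunitary i ((U i).symm x) y
    rw [LinearEquiv.apply_symm_apply] at this
    exact this.symm
  -- commutation data
  have hCuu : ∀ i j, Commute (u i) (u j) := fun i j =>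
    Commute.map (hcomm i j) (LinearEquiv.automorphismGroup.toLinearMapMonoidHom)
  have hCua : ∀ i j, Commute (u i) (LinearMap.adjoint (u j)) := by
    intro i j
    rw [hadj j]
    have : Commute (U i) (U j)⁻¹ := Commute.inv_right (hcomm i j)
    exact Commute.map this (LinearEquiv.automorphismGroup.toLinearMapMonoidHom)
  have hCaa : ∀ i j, Commute (LinearMap.adjoint (u i)) (LinearMap.adjoint (u j)) := by
    intro i j
    rw [hadj i, hadj j]
    have : Commute (U i)⁻¹ (U j)⁻¹ := Commute.inv_left (Commute.inv_right (hcomm i j))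
    exact Commute.map this (LinearEquiv.automorphismGroup.toLinearMapMonoidHom)
  set A : Fin m → V →ₗ[ℂ] V := fun i => u i + LinearMap.adjoint (u i) with hA
  set B : Fin m → V →ₗ[ℂ] V := fun i => Complex.I • (u i - LinearMap.adjoint (u i)) with hB
  set T : Fin m ⊕ Fin m → V →ₗ[ℂ] V := Sum.elim A B with hT
  have hsymm : ∀ j, (T j).IsSymmetric := by
    rintro (i | i) x y
    · simp only [hT, Sum.elim_inl, hA, LinearMap.add_apply, inner_add_left, inner_add_right,
        LinearMap.adjoint_inner_left, LinearMap.adjoint_inner_right]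
      ring
    · simp only [hT, Sum.elim_inr, hB, LinearMap.smul_apply, LinearMap.sub_apply,
        inner_smul_left, inner_smul_right, inner_sub_left, inner_sub_right,
        LinearMap.adjoint_inner_left, LinearMap.adjoint_inner_right, Complex.conj_I]
      ring
  have hCAu : ∀ i j, Commute (A i) (u j) := fun i j =>
    (hCuu i j).add_left ((hCua j i).symm)
  have hCAa : ∀ i j, Commute (A i) (LinearMap.adjoint (u j)) := fun i j =>
    (hCua i j).add_left (hCaa i j)
  have hCAA : ∀ i j, Commute (A i) (A j) := fun i j =>
    (hCAu i j).add_right (hCAa i j)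
  have hCAB : ∀ i j, Commute (A i) (B j) := fun i j =>
    Commute.smul_right ((hCAu i j).sub_right (hCAa i j)) Complex.I
  have hCBB : ∀ i j, Commute (B i) (B j) := fun i j => by
    refine Commute.smul_left (Commute.smul_right ?_ Complex.I) Complex.I
    exact ((hCuu i j).sub_right (hCua i j)).sub_left ((hCua j i).symm.sub_right (hCaa i j))
  have hTcomm : Pairwise (Function.onFun Commute T) := by
    have key : ∀ a b, Commute (T a) (T b) := by
      rintro (i | i) (j | j)
      · exact hCAA i j
      · exact hCAB i j
      · exact (hCAB j i).symm
      · exact hCBB i j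
    exact fun a b _ => key a b
  -- joint eigenspaces
  set E : ((Fin m ⊕ Fin m) → ℂ) → Submodule ℂ V :=
    fun χ => ⨅ j, Module.End.eigenspace (T j) (χ j) with hE
  have htop : ⨆ χ, E χ = ⊤ := LinearMap.IsSymmetric.iSup_iInf_eq_top_of_commute hsymm hTcomm
  set μ : ((Fin m ⊕ Fin m) → ℂ) → Fin m → ℂ :=
    fun χ i => (χ (Sum.inl i) - Complex.I * χ (Sum.inr i)) / 2 with hμ
  -- every vector of E χ is an eigenvector of each U i with eigenvalue μ χ i
  have hkey : ∀ (χ : (Fin m ⊕ Fin m) → ℂ) (i : Fin m) (v : V), v ∈ E χ →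
      (U i) v = μ χ i • v := by
    intro χ i v hv
    rw [hE, Submodule.mem_iInf] at hv
    have hA' := (Module.End.mem_eigenspace_iff).mp (hv (Sum.inl i))
    have hB' := (Module.End.mem_eigenspace_iff).mp (hv (Sum.inr i))
    simp only [hT, Sum.elim_inl, hA, LinearMap.add_apply] at hA'
    simp only [hT, Sum.elim_inr, hB, LinearMap.smul_apply, LinearMap.sub_apply] at hB'
    have h2 : u i v - LinearMap.adjoint (u i) v = (-Complex.I * χ (Sum.inr i)) • v := by
      have h := congrArg (fun w => (-Complex.I) • w) hB'
      simpa [smul_smul, neg_mul, Complex.I_mul_I] using h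
    have h3 : (2:ℂ) • (u i v) = (χ (Sum.inl i) + -Complex.I * χ (Sum.inr i)) • v := by
      rw [two_smul]
      calc u i v + u i v
          = (u i v + LinearMap.adjoint (u i) v) + (u i v - LinearMap.adjoint (u i) v) := by abel
        _ = _ := by rw [hA', h2, ← add_smul]
    have h4 : u i v = ((2:ℂ)⁻¹ * (χ (Sum.inl i) + -Complex.I * χ (Sum.inr i))) • v := by
      calc u i v = ((2:ℂ)⁻¹) • ((2:ℂ) • u i v) := by rw [smul_smul]; norm_num
        _ = _ := by rw [h3, smul_smul]
    show u i v = μ χ i • v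
    rw [h4, hμ]
    congr 1
    field_simp
    ring
  -- modulus one on nontrivial joint eigenspaces
  have hnorm : ∀ χ (i : Fin m) (v : V), v ∈ E χ → v ≠ 0 → Complex.normSq (μ χ i) = 1 := by
    intro χ i v hv hv0
    have h := hunitary i v v
    rw [hkey χ i v hv, inner_smul_left, inner_smul_right, ← mul_assoc,
      ← Complex.normSq_eq_conj_mul_self] at h
    have hvv : ⟪v, v⟫_ℂ ≠ 0 := inner_self_ne_zero.mpr hv0
    have h1 : (Complex.normSq (μ χ i) : ℂ) = 1 := by
      have := mul_right_cancel₀ hvv (h.trans (one_mul ⟪v, v⟫_ℂ).symm)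
      exact this
    exact_mod_cast h1
  -- each nontrivial joint eigenspace gives eigenvalues of finite order
  have hstep : ∀ χ, E χ ≠ ⊥ → ∃ n : ℕ, 0 < n ∧ ∀ i, μ χ i ^ n = 1 := by
    intro χ hχ
    obtain ⟨v, hvE, hv0⟩ := Submodule.exists_mem_ne_zero_of_ne_bot hχ
    have hmem : ∀ i, μ χ i ∈ Submonoid.unitSphere ℂ := by
      intro i
      rw [Submonoid.unitSphere, Submonoid.mem_mk, Subsemigroup.mem_mk, mem_sphere_zero_iff_norm]
      have := hnorm χ i v hvE hv0
      have h2 : ‖μ χ i‖ ^ 2 = 1 := by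
        rw [Complex.sq_norm]
        exact this
      nlinarith [norm_nonneg (μ χ i)]
    set lam : Fin m → Circle := fun i => ⟨μ χ i, hmem i⟩ with hlam
    have hfin : (Subgroup.closure (Set.range lam) : Set Circle).Finite := by
      refine hcon' v lam hv0 ?_
      intro i
      exact hkey χ i v hvE
    haveI : Finite ↥(Subgroup.closure (Set.range lam) : Set Circle) := hfin.to_subtype
    have hord : ∀ i, ∃ k : ℕ, 0 < k ∧ lam i ^ k = 1 := by
      intro i
      have hmem' : lam i ∈ Subgroup.closure (Set.range lam) :=
        Subgroup.subset_closure (Set.mem_range_self i)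
      have := isOfFinOrder_of_finite (⟨lam i, hmem'⟩ : (Subgroup.closure (Set.range lam) : Set Circle))
      obtain ⟨k, hk, hk1⟩ := isOfFinOrder_iff_pow_eq_one.mp this
      refine ⟨k, hk, ?_⟩
      have := congrArg (Subtype.val) hk1
      push_cast at this
      exact_mod_cast this
    choose k hk0 hk1 using hord
    refine ⟨∏ i, k i, Finset.prod_pos (fun i _ => hk0 i), ?_⟩
    intro i
    obtain ⟨c, hc⟩ := Finset.dvd_prod_of_mem k (Finset.mem_univ i)
    have : (lam i : ℂ) ^ (k i) = 1 := by
      rw [← circle_coe_pow, hk1 i, Circle.coe_one]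
    show μ χ i ^ (∏ j, k j) = 1
    rw [hc, pow_mul]
    have hxi : (lam i : ℂ) = μ χ i := rfl
    rw [← hxi, this, one_pow]
  -- only finitely many nontrivial joint eigenspaces
  have hindep : iSupIndep E :=
    (LinearMap.IsSymmetric.orthogonalFamily_iInf_eigenspaces hsymm).independent
  have hSfin : {χ | E χ ≠ ⊥}.Finite := WellFoundedGT.finite_ne_bot_of_iSupIndep hindep
  -- a common exponent
  set n' : ((Fin m ⊕ Fin m) → ℂ) → ℕ :=
    fun χ => if h : E χ ≠ ⊥ then (hstep χ h).choose else 1 with hn'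
  set N : ℕ := ∏ χ ∈ hSfin.toFinset, n' χ with hNdef
  have hNpos : 0 < N := by
    refine Finset.prod_pos ?_
    intro χ _
    by_cases h : E χ ≠ ⊥
    · simp only [hn', dif_pos h]
      exact (hstep χ h).choose_spec.1
    · simp only [hn', dif_neg h]
      exact Nat.one_pos
  -- each U i has order dividing N
  have hUN : ∀ i, U i ^ N = 1 := by
    intro i
    have hmem : ∀ (χ : (Fin m ⊕ Fin m) → ℂ) (w : V), w ∈ E χ → (U i ^ N) w = w := by
      intro χ w hw
      by_cases hχ : E χ = ⊥
      · rw [hχ, Submodule.mem_bot] at hw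
        rw [hw]
        exact map_zero _
      · have powgen : ∀ (kk : ℕ) (w : V), w ∈ E χ → (U i ^ kk) w = μ χ i ^ kk • w := by
          intro kk
          induction kk with
          | zero => intro w _; simp
          | succ k ih =>
              intro w hw
              have h1 : (U i ^ (k + 1)) w = (U i ^ k) ((U i) w) := by
                rw [pow_succ]
                rfl
              rw [h1, hkey χ i w hw, map_smul, ih w hw, smul_smul, pow_succ]
              ring_nf
        have hdvd : n' χ ∣ N := Finset.dvd_prod_of_mem n' (hSfin.mem_toFinset.mpr hχ)
        obtain ⟨c, hc⟩ := hdvd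
        have hμpow : μ χ i ^ N = 1 := by
          rw [hc, pow_mul]
          have h5 : μ χ i ^ n' χ = 1 := by
            simp only [hn', dif_pos hχ]
            exact (hstep χ hχ).choose_spec.2 i
          rw [h5, one_pow]
        rw [powgen N w hw, hμpow, one_smul]
    have hext : ∀ v : V, (U i ^ N) v = v := by
      intro v
      have hv : v ∈ ⨆ χ, E χ := htop ▸ Submodule.mem_top
      exact Submodule.iSup_induction (motive := fun v => (U i ^ N) v = v) E hv hmem (map_zero _)
        (fun x y hx hy => by rw [map_add, hx, hy])
    exact DFunLike.ext _ _ hext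
  -- hence the generated group is finite: contradiction
  set H := Subgroup.closure (Set.range U) with hH
  have hcomm'' : ∀ x ∈ Set.range U, ∀ y ∈ Set.range U, x * y = y * x := by
    rintro x ⟨i, rfl⟩ y ⟨j, rfl⟩; exact hcomm i j
  have hcen : Set.range U ⊆ Subgroup.centralizer (Set.range U) := by
    intro x hx
    rw [SetLike.mem_coe, Subgroup.mem_centralizer_iff]
    intro y hy
    exact hcomm'' y hy x hx
  have hHcen : H ≤ Subgroup.centralizer (Set.range U) :=
    (Subgroup.closure_le _).mpr hcen
  have hHcomm : ∀ x ∈ H, ∀ y ∈ H, x * y = y * x := by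
    intro x hx y hy
    have h2 := Subgroup.closure_le_centralizer_centralizer (Set.range U) hx
    rw [Subgroup.mem_centralizer_iff] at h2
    exact (h2 y (hHcen hy)).symm
  have hpow : ∀ x ∈ H, x ^ N = 1 := by
    intro x hx
    induction hx using Subgroup.closure_induction with
    | mem x hx => obtain ⟨i, rfl⟩ := hx; exact hUN i
    | one => exact one_pow N
    | mul x y hx hy px py =>
        have hc : Commute x y := hHcomm x hx y hy
        rw [hc.mul_pow, px, py, mul_one]
    | inv x hx px => rw [inv_pow, px, inv_one]
  letI : CommGroup H := Subgroup.closureCommGroupOfComm hcomm''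
  have hfinH : Finite ↥H := by
    refine CommGroup.finite_of_fg_torsion ↥H ?_
    intro x
    refine (isOfFinOrder_iff_pow_eq_one).mpr ⟨N, hNpos, ?_⟩
    refine Subtype.ext ?_
    push_cast
    exact hpow x x.2
  exact hinf (Set.toFinite _)
end
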